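/- Let a, b > 0, ν ∈ (0,1), n ≥ 1, h = b/a, with K, m_k, r_k as usual, and Heinz mean H_μ(a,b) = (a^(1-μ)b^μ + a^μ b^(1-μ))/2. Then (a+b)/2 ≤ K(h^(1/2ⁿ))^{-r_n} H_ν(a,b) + (√a − √b)² − Σ_{k=0}^{n-1} r_k [ H_{m_k/2^k}(a,b) − 2H_{(2m_k+1)/2^{k+1}}(a,b) + H_{(m_k+1)/2^k}(a,b) ]. -/

import Mathlib

/-! The refined Young inequality `K(y/x)^min(μ, 1-μ) · x^(1-μ) y^μ ≤ (1-μ)x + μy` is iterated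
along the binary expansion of `μ`. Since `(1-μ)x + μy = μ(√x - √y)² + (1-2μ)x + 2μ√(xy)` for
`μ < 1/2` (and symmetrically for `μ ≥ 1/2`), splitting off `r₀(√x - √y)²` reduces the weighted
mean of `(x, y)` with weight `μ` to that of `(x, √(xy))` with weight `2μ`, or of `(√(xy), y)` with
weight `2μ - 1`; under this substitution `r_{k+1}`, `m_{k+1}` and the ratio `(y/x)^(1/2^(k+1))`
become `r_k`, `m_k` and `(y/x)^(1/2^k)` of the new data. Averaging the resulting inequalities for
`(a, b)` and `(b, a)` bounds `(a+b)/2` from below; the stated reverse bound follows from it since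
`K^r + K^(-r) ≥ 2` and `H_ν(a, b) ≥ √(ab)`. -/

open Real Finset

noncomputable def Kc (t : ℝ) : ℝ := (1 + t)^2 / (4 * t)

noncomputable def rseq (ν : ℝ) : ℕ → ℝ
  | 0 => min ν (1 - ν)
  | k + 1 => min (2 * rseq ν k) (1 - 2 * rseq ν k)

noncomputable def mfl (ν : ℝ) (k : ℕ) : ℝ := ⌊(2:ℝ)^k * ν⌋

noncomputable def weightedGeomMean (x y s : ℝ) : ℝ := x ^ (1 - s) * y ^ s

noncomputable def heinzMean (a b μ : ℝ) : ℝ :=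
  (weightedGeomMean a b μ + weightedGeomMean b a μ) / 2

noncomputable def dyadicSecondDiff (f : ℝ → ℝ) (m : ℝ) (k : ℕ) : ℝ :=
  f (m / 2 ^ k) - 2 * f ((2 * m + 1) / 2 ^ (k + 1)) + f ((m + 1) / 2 ^ k)

lemma Kc_pos {t : ℝ} (ht : 0 < t) : 0 < Kc t := by
  unfold Kc; positivity

lemma Kc_inv (t : ℝ) : Kc t⁻¹ = Kc t := by
  rcases eq_or_ne t 0 with rfl | ht
  · simp
  · unfold Kc; field_simp; ring

lemma Kc_mul_self {t : ℝ} (ht : t ≠ 0) : Kc t * t = ((1 + t) / 2) ^ 2 := by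
  unfold Kc; field_simp; ring

lemma rseq_succ_eq_of_rseq_zero_eq {μ ν : ℝ} (h : rseq ν 0 = rseq μ 1) :
    ∀ k, rseq μ (k + 1) = rseq ν k
  | 0 => h.symm
  | k + 1 => by rw [rseq, rseq_succ_eq_of_rseq_zero_eq h k, rseq]

lemma rseq_succ_of_le_half {μ : ℝ} (hμ : μ ≤ 1 / 2) (k : ℕ) :
    rseq μ (k + 1) = rseq (2 * μ) k :=
  rseq_succ_eq_of_rseq_zero_eq (by simp only [rseq, min_eq_left (by linarith : μ ≤ 1 - μ)]) k

lemma rseq_succ_of_half_le {μ : ℝ} (hμ : 1 / 2 ≤ μ) (k : ℕ) :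
    rseq μ (k + 1) = rseq (2 * μ - 1) k :=
  rseq_succ_eq_of_rseq_zero_eq
    (by simp only [rseq, min_eq_right (by linarith : 1 - μ ≤ μ)]; rw [min_comm]; ring_nf) k

lemma mfl_zero {μ : ℝ} (h0 : 0 ≤ μ) (h1 : μ < 1) : mfl μ 0 = 0 := by
  simp [mfl, Int.floor_eq_zero_iff.mpr ⟨h0, h1⟩]

lemma mfl_succ (μ : ℝ) (k : ℕ) : mfl μ (k + 1) = mfl (2 * μ) k := by
  unfold mfl; ring_nf

lemma mfl_succ_eq_add (μ : ℝ) (k : ℕ) : mfl μ (k + 1) = mfl (2 * μ - 1) k + 2 ^ k := by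
  have h : (2:ℝ) ^ k * (2 * μ - 1) = (2:ℝ) ^ (k + 1) * μ - ((2 ^ k : ℕ) : ℝ) := by
    push_cast; ring
  rw [mfl, mfl, h, Int.floor_sub_natCast]
  push_cast; ring

lemma sqrt_mul_rpow {x y : ℝ} (hx : 0 ≤ x) (hy : 0 ≤ y) (s : ℝ) :
    √(x * y) ^ s = x ^ (s / 2) * y ^ (s / 2) := by
  rw [sqrt_eq_rpow, ← rpow_mul (by positivity), mul_rpow hx hy, one_div_mul_eq_div]

lemma sqrt_mul_div_self {x : ℝ} (hx : 0 < x) (y : ℝ) : √(x * y) / x = √(y / x) := by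
  rw [sqrt_div' _ hx.le, div_eq_div_iff hx.ne' (by positivity), sqrt_mul hx.le]
  linear_combination √y * mul_self_sqrt hx.le

lemma div_sqrt_mul_self {x y : ℝ} (hx : 0 < x) (hy : 0 < y) : y / √(x * y) = √(y / x) := by
  rw [sqrt_div' _ hx.le, div_eq_div_iff (by positivity) (by positivity), sqrt_mul hx.le]
  linear_combination -√x * mul_self_sqrt hy.le

lemma rpow_one_div_two_pow_succ {t : ℝ} (ht : 0 ≤ t) (n : ℕ) :
    t ^ ((1:ℝ) / 2 ^ (n + 1)) = √t ^ ((1:ℝ) / 2 ^ n) := by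
  rw [sqrt_eq_rpow, ← rpow_mul ht, pow_succ]; ring_nf

lemma weightedGeomMean_pos {x y : ℝ} (hx : 0 < x) (hy : 0 < y) (s : ℝ) :
    0 < weightedGeomMean x y s := by
  unfold weightedGeomMean; positivity

lemma weightedGeomMean_swap (x y s : ℝ) :
    weightedGeomMean y x (1 - s) = weightedGeomMean x y s := by
  rw [weightedGeomMean, weightedGeomMean, sub_sub_cancel, mul_comm]

lemma weightedGeomMean_eq_mul_rpow_div {x y : ℝ} (hx : 0 < x) (hy : 0 ≤ y) (s : ℝ) :
    weightedGeomMean x y s = x * (y / x) ^ s := by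
  rw [weightedGeomMean, div_rpow hy hx.le, rpow_sub hx, rpow_one]
  field_simp

lemma weightedGeomMean_sqrt_mul_right {x y : ℝ} (hx : 0 < x) (hy : 0 < y) :
    weightedGeomMean x √(x * y) = fun s => weightedGeomMean x y (s / 2) := by
  funext s
  rw [weightedGeomMean, weightedGeomMean, sqrt_mul_rpow hx.le hy.le, ← mul_assoc, ← rpow_add hx]
  ring_nf

lemma weightedGeomMean_sqrt_mul_left {x y : ℝ} (hx : 0 < x) (hy : 0 < y) :
    weightedGeomMean √(x * y) y = fun s => weightedGeomMean x y ((s + 1) / 2) := by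
  funext s
  rw [weightedGeomMean, weightedGeomMean, sqrt_mul_rpow hx.le hy.le, mul_assoc, ← rpow_add hy]
  ring_nf

lemma dyadicSecondDiff_comp_half (f : ℝ → ℝ) (m : ℝ) (k : ℕ) :
    dyadicSecondDiff (fun s => f (s / 2)) m k = dyadicSecondDiff f m (k + 1) := by
  simp only [dyadicSecondDiff, div_div, ← pow_succ]

lemma dyadicSecondDiff_comp_half_add_half (f : ℝ → ℝ) (m : ℝ) (k : ℕ) :
    dyadicSecondDiff (fun s => f ((s + 1) / 2)) m k
      = dyadicSecondDiff f (m + 2 ^ k) (k + 1) := by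
  have e : ∀ (c : ℝ) (j : ℕ), (c / 2 ^ j + 1) / 2 = (c + 2 ^ j) / 2 ^ (j + 1) := fun c j => by
    rw [pow_succ]; field_simp
  simp only [dyadicSecondDiff, e]
  rw [pow_succ _ k]
  ring_nf

lemma dyadicSecondDiff_weightedGeomMean_zero {x y : ℝ} (hx : 0 ≤ x) (hy : 0 ≤ y) :
    dyadicSecondDiff (weightedGeomMean x y) 0 0 = x - 2 * √(x * y) + y := by
  simp [dyadicSecondDiff, weightedGeomMean, sqrt_eq_rpow, mul_rpow hx hy]
  norm_num

lemma dyadicSecondDiff_heinzMean (a b m : ℝ) (k : ℕ) :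
    dyadicSecondDiff (heinzMean a b) m k
      = (dyadicSecondDiff (weightedGeomMean a b) m k
          + dyadicSecondDiff (weightedGeomMean b a) m k) / 2 := by
  simp only [dyadicSecondDiff, heinzMean]; ring

lemma Kc_rpow_mul_rpow_le {h μ : ℝ} (hh : 0 < h) (h0 : 0 ≤ μ) (hμ : μ ≤ 1 / 2) :
    Kc h ^ μ * h ^ μ ≤ 1 - μ + μ * h := by
  have bernoulli := rpow_one_add_le_one_add_mul_self (s := (h - 1) / 2) (p := 2 * μ)
    (by linarith) (by linarith) (by linarith)
  rw [← mul_rpow (Kc_pos hh).le hh.le, Kc_mul_self hh.ne', ← rpow_natCast,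
    ← rpow_mul (by positivity)]
  calc ((1 + h) / 2) ^ ((2:ℕ) * μ) = (1 + (h - 1) / 2) ^ (2 * μ) := by ring_nf
    _ ≤ 1 + 2 * μ * ((h - 1) / 2) := bernoulli
    _ = 1 - μ + μ * h := by ring

lemma Kc_rpow_mul_weightedGeomMean_le {x y μ : ℝ} (hx : 0 < x) (hy : 0 < y) (h0 : 0 ≤ μ)
    (hμ : μ ≤ 1 / 2) : Kc (y / x) ^ μ * weightedGeomMean x y μ ≤ (1 - μ) * x + μ * y := by
  have key := mul_le_mul_of_nonneg_right (Kc_rpow_mul_rpow_le (div_pos hy hx) h0 hμ) hx.le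
  rw [weightedGeomMean_eq_mul_rpow_div hx hy.le]
  calc Kc (y / x) ^ μ * (x * (y / x) ^ μ) = Kc (y / x) ^ μ * (y / x) ^ μ * x := by ring
    _ ≤ (1 - μ + μ * (y / x)) * x := key
    _ = (1 - μ) * x + μ * y := by field_simp

lemma Kc_rpow_min_mul_weightedGeomMean_le {x y μ : ℝ} (hx : 0 < x) (hy : 0 < y) (h0 : 0 ≤ μ)
    (h1 : μ ≤ 1) :
    Kc (y / x) ^ min μ (1 - μ) * weightedGeomMean x y μ ≤ (1 - μ) * x + μ * y := by
  rcases le_total μ (1 / 2) with hμ | hμ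
  · rw [min_eq_left (by linarith)]
    exact Kc_rpow_mul_weightedGeomMean_le hx hy h0 hμ
  · have := Kc_rpow_mul_weightedGeomMean_le hy hx (by linarith) (by linarith : 1 - μ ≤ 1 / 2)
    rw [weightedGeomMean_swap, ← inv_div, Kc_inv] at this
    rw [min_eq_right (by linarith)]
    linarith

theorem refined_young (n : ℕ) {μ x y : ℝ} (h0 : 0 ≤ μ) (h1 : μ < 1) (hx : 0 < x) (hy : 0 < y) :
    ∑ k ∈ range n, rseq μ k * dyadicSecondDiff (weightedGeomMean x y) (mfl μ k) k
      + Kc ((y / x) ^ ((1:ℝ) / 2 ^ n)) ^ rseq μ n * weightedGeomMean x y μ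
      ≤ (1 - μ) * x + μ * y := by
  induction n generalizing μ x y with
  | zero => simpa [rseq] using Kc_rpow_min_mul_weightedGeomMean_le hx hy h0 h1.le
  | succ n ih =>
    have hz : 0 < √(x * y) := by positivity
    rw [sum_range_succ', mfl_zero h0 h1, dyadicSecondDiff_weightedGeomMean_zero hx.le hy.le,
      rpow_one_div_two_pow_succ (by positivity)]
    rcases lt_or_ge μ (1 / 2) with hμ | hμ
    · have step := ih (μ := 2 * μ) (by linarith) (by linarith) hx hz
      simp only [← rseq_succ_of_le_half hμ.le, ← mfl_succ, sqrt_mul_div_self hx,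
        weightedGeomMean_sqrt_mul_right hx hy, dyadicSecondDiff_comp_half,
        mul_div_cancel_left₀ μ two_ne_zero] at step
      rw [show rseq μ 0 = μ from min_eq_left (by linarith)]
      linarith
    · have step := ih (μ := 2 * μ - 1) (by linarith) (by linarith) hz hy
      simp only [← rseq_succ_of_half_le hμ, ← mfl_succ_eq_add, div_sqrt_mul_self hx hy,
        weightedGeomMean_sqrt_mul_left hx hy, dyadicSecondDiff_comp_half_add_half,
        sub_add_cancel, mul_div_cancel_left₀ μ two_ne_zero] at step
      rw [show rseq μ 0 = 1 - μ from min_eq_right (by linarith)]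
      linarith

theorem refined_heinz (n : ℕ) {ν a b : ℝ} (h0 : 0 ≤ ν) (h1 : ν < 1) (ha : 0 < a) (hb : 0 < b) :
    ∑ k ∈ range n, rseq ν k * dyadicSecondDiff (heinzMean a b) (mfl ν k) k
      + Kc ((b / a) ^ ((1:ℝ) / 2 ^ n)) ^ rseq ν n * heinzMean a b ν ≤ (a + b) / 2 := by
  have hab := refined_young n h0 h1 ha hb
  have hba := refined_young n h0 h1 hb ha
  rw [← inv_div, inv_rpow (by positivity), Kc_inv] at hba
  have hsum : ∑ k ∈ range n, rseq ν k * dyadicSecondDiff (heinzMean a b) (mfl ν k) k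
      = (∑ k ∈ range n, rseq ν k * dyadicSecondDiff (weightedGeomMean a b) (mfl ν k) k
        + ∑ k ∈ range n, rseq ν k * dyadicSecondDiff (weightedGeomMean b a) (mfl ν k) k) / 2 := by
    rw [← sum_add_distrib, sum_div]
    exact sum_congr rfl fun k _ => by rw [dyadicSecondDiff_heinzMean]; ring
  rw [hsum, heinzMean]
  linarith

lemma two_mul_le_add_of_mul_eq_sq {u v c : ℝ} (hu : 0 ≤ u) (hv : 0 ≤ v) (h : u * v = c ^ 2) :
    2 * c ≤ u + v := by
  nlinarith [sq_nonneg (u - v)]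

lemma sqrt_mul_sqrt_le_heinzMean {a b : ℝ} (ha : 0 < a) (hb : 0 < b) (ν : ℝ) :
    √a * √b ≤ heinzMean a b ν := by
  have hprod : weightedGeomMean a b ν * weightedGeomMean b a ν = (√a * √b) ^ 2 := by
    rw [mul_pow, sq_sqrt ha.le, sq_sqrt hb.le, weightedGeomMean, weightedGeomMean,
      show a ^ (1 - ν) * b ^ ν * (b ^ (1 - ν) * a ^ ν)
        = a ^ (1 - ν) * a ^ ν * (b ^ (1 - ν) * b ^ ν) by ring,
      ← rpow_add ha, ← rpow_add hb, sub_add_cancel, rpow_one, rpow_one]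
  have := two_mul_le_add_of_mul_eq_sq (weightedGeomMean_pos ha hb ν).le
    (weightedGeomMean_pos hb ha ν).le hprod
  unfold heinzMean; linarith

theorem stmt16_general (a b ν : ℝ) (ha : 0 < a) (hb : 0 < b) (hν : ν ∈ Set.Ioo (0:ℝ) 1)
    (n : ℕ) (h : ℝ) (hh : h = b / a) (H : ℝ → ℝ)
    (hH : H = (fun μ : ℝ => (a ^ (1 - μ) * b ^ μ + a ^ μ * b ^ (1 - μ)) / 2)) :
    (a + b) / 2 ≤ Kc (h ^ ((1:ℝ)/2^n)) ^ (-(rseq ν n)) * H ν + (Real.sqrt a - Real.sqrt b)^2 - (∑ k ∈ Finset.range n, rseq ν k * (H (mfl ν k / 2^k) - 2 * H ((2 * mfl ν k + 1) / 2^(k+1)) + H ((mfl ν k + 1) / 2^k))) := by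
  obtain rfl : H = heinzMean a b := by
    subst hH; funext μ; simp only [heinzMean, weightedGeomMean]; ring
  subst hh
  have heinz := refined_heinz n hν.1.le hν.2 ha hb
  set K := Kc ((b / a) ^ ((1:ℝ) / 2 ^ n))
  have hK : 0 < K := Kc_pos (by positivity)
  have hmean := sqrt_mul_sqrt_le_heinzMean ha hb ν
  have hM : 0 ≤ heinzMean a b ν := (by positivity : 0 ≤ √a * √b).trans hmean
  have hKK : 2 * heinzMean a b ν
      ≤ K ^ rseq ν n * heinzMean a b ν + K ^ (-rseq ν n) * heinzMean a b ν :=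
    two_mul_le_add_of_mul_eq_sq (by positivity) (by positivity)
      (by rw [rpow_neg hK.le]; field_simp)
  unfold dyadicSecondDiff at heinz
  rw [sub_sq, sq_sqrt ha.le, sq_sqrt hb.le]
  linarith

theorem stmt16 (a b ν : ℝ) (ha : 0 < a) (hb : 0 < b) (hν : ν ∈ Set.Ioo (0:ℝ) 1)
    (n : ℕ) (hn : 1 ≤ n) (h : ℝ) (hh : h = b / a) (H : ℝ → ℝ)
    (hH : H = (fun μ : ℝ => (a ^ (1 - μ) * b ^ μ + a ^ μ * b ^ (1 - μ)) / 2)) :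
    (a + b) / 2 ≤ Kc (h ^ ((1:ℝ)/2^n)) ^ (-(rseq ν n)) * H ν + (Real.sqrt a - Real.sqrt b)^2 - (∑ k ∈ Finset.range n, rseq ν k * (H (mfl ν k / 2^k) - 2 * H ((2 * mfl ν k + 1) / 2^(k+1)) + H ((mfl ν k + 1) / 2^k))) :=
  stmt16_general a b ν ha hb hν n h hh H hH
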